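/- Let T_A = Aℤⁿ/qℤⁿ be a discrete torus with induced edge weights w, let x ∈ Aℤⁿ and y = x + αₙ. Suppose that for all u, v ∈ B₁(x) ∪ B₁(y) ⊂ Aℤⁿ one has d(u,v) = d([u],[v]), where d denotes combinatorial graph distance in the grid Aℤⁿ and in T_A respectively. Then κ([x],[y]) = 2w(x,y) − w(x, x−αₙ) − w(y, y+αₙ) − Σ_{i=1}^{n−1} ( |w(x, x+α_i) − w(y, y+α_i)| + |w(x, x−α_i) − w(y, y−α_i)| ). -/

import Mathlib

open Filter Topology

noncomputable section

namespace PMT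

/-- The `i`-th standard unit vector in `ℤⁿ`. -/
def e (n : ℕ) (i : Fin n) : Fin n → ℤ := fun j => if j = i then 1 else 0

/-- The grid graph on `ℤⁿ`: `x ∼ y` iff `‖x − y‖₁ = 1`. -/
def grid (n : ℕ) : SimpleGraph (Fin n → ℤ) where
  Adj x y := (∑ i, |x i - y i|) = 1
  symm := by
    constructor
    intro x y h
    have h' : ∀ i ∈ Finset.univ, |y i - x i| = |x i - y i| :=
      fun i _ => abs_sub_comm _ _
    rw [Finset.sum_congr rfl h']
    exact h
  loopless := by constructor; intro x h; simp at h

/-- The graph Laplacian `Δf(x) = Σ_{y∼x} w(x,y)(f(y)−f(x))` of an integer-valued function. -/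
def lap {V : Type*} (G : SimpleGraph V) (w : V → V → ℝ) (f : V → ℤ) (x : V) : ℝ :=
  ∑ᶠ y ∈ {y | G.Adj x y}, w x y * ((f y : ℝ) - (f x : ℝ))

/-- `f : V → ℤ` is 1-Lipschitz with respect to the combinatorial graph distance. -/
def Lip1 {V : Type*} (G : SimpleGraph V) (f : V → ℤ) : Prop :=
  ∀ x y, |f x - f y| ≤ (G.dist x y : ℤ)

/-- Ollivier curvature of the pair `(x, y)`:
`κ(x,y) = inf {Δf(x) − Δf(y) | f : V → ℤ, f 1-Lipschitz, f(y) = f(x) + 1}`. -/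
def kappa {V : Type*} (G : SimpleGraph V) (w : V → V → ℝ) (x y : V) : ℝ :=
  sInf {r | ∃ f : V → ℤ, Lip1 G f ∧ f y = f x + 1 ∧ r = lap G w f x - lap G w f y}

/-- Scalar curvature `R(x) = Σ_{y∼x} κ(x,y)`. -/
def scal {V : Type*} (G : SimpleGraph V) (w : V → V → ℝ) (x : V) : ℝ :=
  ∑ᶠ y ∈ {y | G.Adj x y}, kappa G w x y

/-- A weighted grid graph `(ℤⁿ, w)`: symmetric weights, positive on edges. -/
structure GridWeight (n : ℕ) where
  w : (Fin n → ℤ) → (Fin n → ℤ) → ℝ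
  symm : ∀ x y, w x y = w y x
  pos : ∀ x y, (grid n).Adj x y → 0 < w x y

/-- The quantity `Abs(x)` measuring the distortion from the standard grid graph. -/
def Absf (n : ℕ) (w : (Fin n → ℤ) → (Fin n → ℤ) → ℝ) (x : Fin n → ℤ) : ℝ :=
  ∑ i, ∑ j, if i ≠ j then
      (|w x (x + e n i) - w (x + e n j) (x + e n j + e n i)| +
       |w x (x + e n i) - w (x - e n j) (x - e n j + e n i)| +
       |w x (x - e n i) - w (x + e n j) (x + e n j - e n i)| +
       |w x (x - e n i) - w (x - e n j) (x - e n j - e n i)|)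
    else 0

/-- The `ℓ^∞` norm `‖x‖_∞` of `x ∈ ℤⁿ`, as a natural number. -/
def nInf {n : ℕ} (x : Fin n → ℤ) : ℕ := Finset.univ.sup fun i => (x i).natAbs

/-- The cube `Q_r = {y ∈ ℤⁿ : ‖y‖∞ ≤ r}` as a finset. -/
def Qr (n r : ℕ) : Finset (Fin n → ℤ) := Finset.Icc (fun _ => -(r : ℤ)) (fun _ => (r : ℤ))

/-- `Σ_{e ∈ E_r} w(e)`: the sum of weights of edges with exactly one endpoint in `Q_r`
(each such edge is counted once, via its endpoint inside `Q_r`). -/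
def ErSum (n : ℕ) (w : (Fin n → ℤ) → (Fin n → ℤ) → ℝ) (r : ℕ) : ℝ :=
  ∑ x ∈ Qr n r, ∑ i,
    ((if x + e n i ∉ Qr n r then w x (x + e n i) else 0) +
     (if x - e n i ∉ Qr n r then w x (x - e n i) else 0))

/-- `Σ_{τ ∈ Ẽ_r} w(τ)`: the sum of weights of edges joining the sphere `S_{r+1}` to the
sphere `S_{r+2}` (each such edge is counted once, via its endpoint in `S_{r+1}`). -/
def TErSum (n : ℕ) (w : (Fin n → ℤ) → (Fin n → ℤ) → ℝ) (r : ℕ) : ℝ :=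
  ∑ x ∈ Qr n (r + 1), if nInf x = r + 1 then
      (∑ i, ((if nInf (x + e n i) = r + 2 then w x (x + e n i) else 0) +
             (if nInf (x - e n i) = r + 2 then w x (x - e n i) else 0)))
    else 0

/-- The weighted grid graph `(ℤⁿ, w)` is asymptotically flat: there is `p > n` with
`w = 1 + o(1)`, `Abs(x) = O(‖x‖∞^{−p})` and `|R(x)| = O(‖x‖∞^{−p})` as `‖x‖∞ → ∞`. -/
def AsympFlatGrid (n : ℕ) (W : GridWeight n) : Prop :=
  ∃ p : ℝ, (n : ℝ) < p ∧
    (∀ ε : ℝ, 0 < ε → ∃ M : ℕ, ∀ x y, (grid n).Adj x y → M ≤ nInf x → |W.w x y - 1| ≤ ε) ∧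
    (∃ C : ℝ, ∃ M : ℕ, 0 < M ∧ ∀ x, M ≤ nInf x → Absf n W.w x ≤ C * (nInf x : ℝ) ^ (-p)) ∧
    (∃ C : ℝ, ∃ M : ℕ, 0 < M ∧ ∀ x, M ≤ nInf x → |scal (grid n) W.w x| ≤ C * (nInf x : ℝ) ^ (-p))

/-- The data of a discrete torus `T_A = Aℤⁿ/qℤⁿ`: an integer matrix `A` with
`det A ≠ 0`, and `q = k·|det A|` for some `k ∈ ℤ₊`. We parametrize the lattice `Aℤⁿ` by
`ℤⁿ` via `z ↦ Az` (so the vertex `x = Az` corresponds to `z`, and `α_i = A e_i`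
corresponds to `e_i`). -/
structure TorusData (n : ℕ) where
  A : Matrix (Fin n) (Fin n) ℤ
  hdet : A.det ≠ 0
  k : ℕ
  hk : 0 < k

/-- `q = k·|det A|`. -/
def TorusData.q {n : ℕ} (T : TorusData n) : ℕ := T.k * T.A.det.natAbs

/-- The subgroup `{z ∈ ℤⁿ | Az ∈ qℤⁿ}` of `ℤⁿ`; under `z ↦ Az` it corresponds to the
sublattice `qℤⁿ ⊆ Aℤⁿ`. -/
def TorusData.lat {n : ℕ} (T : TorusData n) : AddSubgroup (Fin n → ℤ) where
  carrier := {z | ∀ j, ((T.q : ℤ)) ∣ T.A.mulVec z j}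
  zero_mem' := by intro j; simp [Matrix.mulVec_zero]
  add_mem' := by
    intro a b ha hb j
    rw [Matrix.mulVec_add]
    exact dvd_add (ha j) (hb j)
  neg_mem' := by
    intro a ha j
    rw [Matrix.mulVec_neg]
    exact dvd_neg.mpr (ha j)

/-- The vertex set of the discrete torus `T_A = Aℤⁿ/qℤⁿ` (in the `z`-parametrization). -/
def TorusV {n : ℕ} (T : TorusData n) : Type := (Fin n → ℤ) ⧸ T.lat

instance {n : ℕ} (T : TorusData n) : AddCommGroup (TorusV T) :=
  QuotientAddGroup.Quotient.addCommGroup T.lat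

/-- The quotient map `Aℤⁿ → T_A` (in the `z`-parametrization, `z` stands for `x = Az`). -/
def tmk {n : ℕ} (T : TorusData n) (z : Fin n → ℤ) : TorusV T := QuotientAddGroup.mk z

/-- The graph structure of the discrete torus: `[x] ∼ [y]` iff `x − y ∈ qℤⁿ ± α_i`
for some `i` (and `[x] ≠ [y]`, so that the graph is simple). -/
def torusG {n : ℕ} (T : TorusData n) : SimpleGraph (TorusV T) where
  Adj a b := a ≠ b ∧ ∃ i : Fin n, b - a = tmk T (e n i) ∨ a - b = tmk T (e n i)
  symm := by
    constructor
    rintro a b ⟨hne, i, h | h⟩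
    · exact ⟨hne.symm, i, Or.inr h⟩
    · exact ⟨hne.symm, i, Or.inl h⟩
  loopless := by constructor; rintro a ⟨hne, -⟩; exact hne rfl

/-- The distance condition: every combinatorial ball of radius 2 in the lattice `Aℤⁿ`
embeds isometrically into the torus, i.e. `d(u,v) = d([u],[v])` for all `u, v ∈ B₂(x)`. -/
def DistCond {n : ℕ} (T : TorusData n) : Prop :=
  ∀ x u v : Fin n → ℤ, (grid n).dist x u ≤ 2 → (grid n).dist x v ≤ 2 →
    (grid n).dist u v = (torusG T).dist (tmk T u) (tmk T v)

/-!
The torus neighbours of `[z]` and `[y]` are the classes `[z ± e i]` and `[y ± e i]`; by the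
isometry hypothesis they are pairwise distinct, so `Δf[z] - Δf[y]` splits into one term per
direction `s`, namely `w_z(s) a_s - w_y(s) b_s` with slopes `a_s = f[z + s] - f[z]` and
`b_s = f[y + s] - f[y]`. A 1-Lipschitz `f` with `f[y] = f[z] + 1` has `|a_s| ≤ 1` and `b_s ≤ a_s`
(because `y + s` is a neighbour of `z + s`), which bounds each term below by
`-|w_z(s) - w_y(s)|`; in the two directions `±e k` of the edge `z ∼ y` one of the slopes is forced
(`a_{+e k} = 1`, `b_{-e k} = -1`) and the bound is `±(w_z(s) - w_y(s))`. It is attained: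
prescribing the slope `∓1` against the sign of `w_z(s) - w_y(s)` gives a 1-Lipschitz function on
the grid (a sum of one-variable hinge functions) whose values on `B₁(z) ∪ B₁(y)` carry over
isometrically to the torus, where McShane's formula extends them.
-/

open Function Set Sum

section Lipschitz

variable {V : Type*} {G : SimpleGraph V} {f : V → ℤ}

theorem abs_sub_le_length_of_forall_adj (hf : ∀ a b, G.Adj a b → |f a - f b| ≤ 1)
    {a b : V} (p : G.Walk a b) : |f a - f b| ≤ p.length := by
  induction p with
  | nil => simp
  | cons hadj _ ih =>
    rw [SimpleGraph.Walk.length_cons]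
    calc _ ≤ |f _ - f _| + |f _ - f _| := abs_sub_le _ _ _
      _ ≤ _ := by push_cast; linarith [hf _ _ hadj]

theorem lip1_of_forall_adj (hG : G.Connected) (hf : ∀ a b, G.Adj a b → |f a - f b| ≤ 1) :
    Lip1 G f := fun a b => by
  obtain ⟨p, hp⟩ := hG.exists_walk_length_eq_dist a b
  exact hp ▸ abs_sub_le_length_of_forall_adj hf p

/-- McShane extension: `F v = min_j (g j + d(p j, v))`. -/
theorem exists_lip1_extension {ι : Type*} [Fintype ι] [Nonempty ι] (hG : G.Connected)
    (p : ι → V) (g : ι → ℤ) (hg : ∀ i j, |g i - g j| ≤ G.dist (p i) (p j)) :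
    ∃ F : V → ℤ, Lip1 G F ∧ ∀ i, F (p i) = g i := by
  set F : V → ℤ := fun v => Finset.univ.inf' Finset.univ_nonempty fun j => g j + G.dist (p j) v
  have hF : ∀ a b, F a ≤ F b + G.dist a b := fun a b => by
    obtain ⟨j, -, hj⟩ := Finset.exists_mem_eq_inf' Finset.univ_nonempty
      fun j => g j + (G.dist (p j) b : ℤ)
    have htri : G.dist (p j) a ≤ G.dist (p j) b + G.dist a b :=
      hG.dist_triangle.trans_eq (by rw [SimpleGraph.dist_comm (u := b)])
    calc F a ≤ g j + G.dist (p j) a := Finset.inf'_le _ (Finset.mem_univ j)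
      _ ≤ F b + G.dist a b := by rw [show F b = _ from hj]; omega
  refine ⟨F, fun a b => abs_le.mpr ⟨?_, by linarith [hF a b]⟩, fun i => le_antisymm ?_ ?_⟩
  · have := hF b a
    rw [SimpleGraph.dist_comm] at this
    omega
  · simpa using Finset.inf'_le (fun j => g j + (G.dist (p j) (p i) : ℤ)) (Finset.mem_univ i)
  · refine Finset.le_inf' _ _ fun j _ => ?_
    have := (abs_le.mp (hg i j)).2
    rw [SimpleGraph.dist_comm] at this
    omega

end Lipschitz

theorem reachable_add_of_mem_closure {A : Type*} [AddCommGroup A] {G : SimpleGraph A} {S : Set A}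
    (hS : ∀ a, ∀ g ∈ S, G.Reachable a (a + g)) {c : A} (hc : c ∈ AddSubgroup.closure S) (a : A) :
    G.Reachable a (a + c) := by
  induction hc using AddSubgroup.closure_induction generalizing a with
  | mem g hg => exact hS a g hg
  | zero => simp
  | add c d _ _ hc hd => simpa [add_assoc] using (hc a).trans (hd (a + c))
  | neg c _ hc => simpa using ((hc (a + -c)).symm)

section Grid

variable {m : ℕ}

theorem closure_range_e : AddSubgroup.closure (range (e m)) = ⊤ := by
  refine eq_top_iff.mpr fun c _ => ?_
  rw [pi_eq_sum_univ c]
  refine AddSubgroup.sum_mem _ fun i _ => AddSubgroup.zsmul_mem _ ?_ _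
  refine AddSubgroup.subset_closure ⟨i, funext fun j => ?_⟩
  simp [e, eq_comm]

def gridNbr (u : Fin m → ℤ) : Fin m ⊕ Fin m → Fin m → ℤ :=
  Sum.elim (fun i => u + e m i) (fun i => u - e m i)

@[simp] theorem gridNbr_inl (u : Fin m → ℤ) (i : Fin m) : gridNbr u (inl i) = u + e m i := rfl

@[simp] theorem gridNbr_inr (u : Fin m → ℤ) (i : Fin m) : gridNbr u (inr i) = u - e m i := rfl

theorem gridNbr_add (u c : Fin m → ℤ) (s : Fin m ⊕ Fin m) :
    gridNbr (u + c) s = gridNbr u s + c := by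
  cases s <;> simp only [gridNbr_inl, gridNbr_inr] <;> abel

theorem gridNbr_injective (u : Fin m → ℤ) : Injective (gridNbr u) := by
  rintro (i | i) (j | j) h <;> have := congrFun h i <;> simp [e] at this <;> grind

theorem gridNbr_ne (u : Fin m → ℤ) (s : Fin m ⊕ Fin m) : gridNbr u s ≠ u := by
  rcases s with i | i <;> intro h <;> have := congrFun h i <;> simp [e] at this

theorem grid_adj_gridNbr (u : Fin m → ℤ) (s : Fin m ⊕ Fin m) : (grid m).Adj u (gridNbr u s) := by
  rcases s with i | i <;> simp [grid, e, apply_ite]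

theorem grid_connected : (grid m).Connected := by
  rw [SimpleGraph.connected_iff_exists_forall_reachable]
  refine ⟨0, fun v => ?_⟩
  have hS : ∀ a, ∀ g ∈ range (e m), (grid m).Reachable a (a + g) := by
    rintro a _ ⟨i, rfl⟩
    exact (grid_adj_gridNbr a (inl i)).reachable
  simpa using reachable_add_of_mem_closure hS (closure_range_e ▸ AddSubgroup.mem_top v) 0

end Grid

section Torus

variable {m : ℕ} (T : TorusData m)

theorem tmk_add (a b : Fin m → ℤ) : tmk T (a + b) = tmk T a + tmk T b := rfl

theorem tmk_sub (a b : Fin m → ℤ) : tmk T (a - b) = tmk T a - tmk T b := rfl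

variable {T}

theorem torusG_adj_tmk_iff {u : Fin m → ℤ} {b : TorusV T} :
    (torusG T).Adj (tmk T u) b ↔ tmk T u ≠ b ∧ ∃ s, tmk T (gridNbr u s) = b := by
  refine and_congr_right fun _ => ⟨?_, ?_⟩
  · rintro ⟨i, h | h⟩
    · exact ⟨inl i, by rw [gridNbr_inl, tmk_add, ← h]; abel⟩
    · exact ⟨inr i, by rw [gridNbr_inr, tmk_sub, ← h]; abel⟩
  · rintro ⟨i | i, rfl⟩
    · exact ⟨i, Or.inl (by rw [gridNbr_inl, tmk_add]; abel)⟩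
    · exact ⟨i, Or.inr (by rw [gridNbr_inr, tmk_sub]; abel)⟩

theorem torusG_dist_gridNbr_le_one (u : Fin m → ℤ) (s : Fin m ⊕ Fin m) :
    (torusG T).dist (tmk T u) (tmk T (gridNbr u s)) ≤ 1 := by
  by_cases h : tmk T u = tmk T (gridNbr u s)
  · simp [h]
  · exact (SimpleGraph.dist_eq_one_iff_adj.mpr (torusG_adj_tmk_iff.mpr ⟨h, s, rfl⟩)).le

theorem Lip1.abs_sub_gridNbr_le_one {f : TorusV T → ℤ} (hf : Lip1 (torusG T) f)
    (u : Fin m → ℤ) (s : Fin m ⊕ Fin m) : |f (tmk T (gridNbr u s)) - f (tmk T u)| ≤ 1 := by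
  rw [abs_sub_comm]
  exact (hf _ _).trans (by exact_mod_cast torusG_dist_gridNbr_le_one u s)

variable (T) in
theorem torusG_connected : (torusG T).Connected := by
  rw [SimpleGraph.connected_iff_exists_forall_reachable]
  refine ⟨0, fun b => ?_⟩
  induction b using QuotientAddGroup.induction_on with | H v => ?_
  let π : (Fin m → ℤ) →+ TorusV T := QuotientAddGroup.mk' T.lat
  have hS : ∀ a, ∀ g ∈ π '' range (e m), (torusG T).Reachable a (a + g) := by
    rintro a _ ⟨_, ⟨i, rfl⟩, rfl⟩
    induction a using QuotientAddGroup.induction_on with | H u => ?_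
    change (torusG T).Reachable (tmk T u) (tmk T (gridNbr u (inl i)))
    by_cases h : tmk T u = tmk T (gridNbr u (inl i))
    · exact h ▸ SimpleGraph.Reachable.refl _
    · exact (torusG_adj_tmk_iff.mpr ⟨h, inl i, rfl⟩).reachable
  have hv : π v ∈ AddSubgroup.closure (π '' range (e m)) := by
    rw [← AddMonoidHom.map_closure, closure_range_e]
    exact AddSubgroup.mem_map_of_mem _ (AddSubgroup.mem_top v)
  have := reachable_add_of_mem_closure hS hv 0
  rwa [zero_add] at this

theorem lap_torusG_tmk (w : TorusV T → TorusV T → ℝ) (f : TorusV T → ℤ) {u : Fin m → ℤ}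
    (hu : InjOn (tmk T) (insert u (range (gridNbr u)))) :
    lap (torusG T) w f (tmk T u) = ∑ s, w (tmk T u) (tmk T (gridNbr u s)) *
      ((f (tmk T (gridNbr u s)) : ℝ) - f (tmk T u)) := by
  have hne : ∀ s, tmk T u ≠ tmk T (gridNbr u s) := fun s h =>
    gridNbr_ne u s (hu (by simp) (by simp) h).symm
  have hinj : Injective (tmk T ∘ gridNbr u) := fun s s' h =>
    gridNbr_injective u (hu (by simp) (by simp) h)
  have hnbr : {b | (torusG T).Adj (tmk T u) b} = range (tmk T ∘ gridNbr u) := by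
    ext b
    simp only [mem_ofPred_eq, torusG_adj_tmk_iff, mem_range, comp_apply]
    exact ⟨fun h => h.2, fun ⟨s, hs⟩ => ⟨hs ▸ hne s, s, hs⟩⟩
  rw [lap, hnbr, finsum_mem_range hinj, finsum_eq_sum_of_fintype]
  rfl

end Torus

section Hinge

def hinge (s t x : ℤ) : ℤ := s * max x 0 - t * min x 0

variable {s t : ℤ}

@[simp] theorem hinge_zero : hinge s t 0 = 0 := by simp [hinge]

@[simp] theorem hinge_one : hinge s t 1 = s := by simp [hinge]

@[simp] theorem hinge_neg_one : hinge s t (-1) = t := by simp [hinge]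

theorem hinge_one_neg_one (x : ℤ) : hinge 1 (-1) x = x := by simp [hinge]

theorem abs_hinge_sub_hinge_le (hs : |s| ≤ 1) (ht : |t| ≤ 1) (a b : ℤ) :
    |hinge s t a - hinge s t b| ≤ |a - b| := by
  obtain ⟨hs₁, hs₂⟩ := abs_le.mp hs
  obtain ⟨ht₁, ht₂⟩ := abs_le.mp ht
  interval_cases s <;> interval_cases t <;> simp only [hinge, Int.abs_eq_natAbs] <;> omega

variable {m : ℕ} {ε : Fin m ⊕ Fin m → ℤ} {z : Fin m → ℤ}

def hingeSum (ε : Fin m ⊕ Fin m → ℤ) (z v : Fin m → ℤ) : ℤ :=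
  ∑ j, hinge (ε (inl j)) (ε (inr j)) (v j - z j)

theorem hingeSum_gridNbr (s : Fin m ⊕ Fin m) : hingeSum ε z (gridNbr z s) = ε s := by
  rcases s with i | i <;>
  · rw [hingeSum, Finset.sum_eq_single i (fun j _ hj => by simp [e, hj]) (by simp)]
    simp [e]

theorem hingeSum_add_e {k : Fin m} (hk : ε (inl k) = 1) (hk' : ε (inr k) = -1) (v : Fin m → ℤ) :
    hingeSum ε z (v + e m k) = hingeSum ε z v + 1 := by
  have hterm : ∀ j, hinge (ε (inl j)) (ε (inr j)) ((v + e m k) j - z j) =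
      hinge (ε (inl j)) (ε (inr j)) (v j - z j) + if j = k then 1 else 0 := by
    intro j
    by_cases hj : j = k
    · subst hj
      simp only [hk, hk', Pi.add_apply, e, ↓reduceIte, hinge_one_neg_one]
      ring
    · simp [e, hj]
  rw [hingeSum, hingeSum, Finset.sum_congr rfl fun j _ => hterm j, Finset.sum_add_distrib]
  simp

theorem lip1_hingeSum (hε : ∀ s, |ε s| ≤ 1) : Lip1 (grid m) (hingeSum ε z) := by
  refine lip1_of_forall_adj grid_connected fun u v (huv : ∑ j, |u j - v j| = 1) => ?_
  rw [hingeSum, hingeSum, ← Finset.sum_sub_distrib, ← huv]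
  refine (Finset.abs_sum_le_sum_abs _ _).trans (Finset.sum_le_sum fun j _ => ?_)
  simpa using abs_hinge_sub_hinge_le (hε (inl j)) (hε (inr j)) (u j - z j) (v j - z j)

end Hinge

section Curvature

variable {m : ℕ} {T : TorusData m}

def IsometricOn (T : TorusData m) (S : Set (Fin m → ℤ)) : Prop :=
  ∀ u ∈ S, ∀ v ∈ S, (grid m).dist u v = (torusG T).dist (tmk T u) (tmk T v)

theorem IsometricOn.injOn {S : Set (Fin m → ℤ)} (h : IsometricOn T S) : InjOn (tmk T) S :=
  fun u hu v hv huv => by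
    have hd := h u hu v hv
    rwa [huv, SimpleGraph.dist_self, (grid_connected.preconnected u v).dist_eq_zero_iff] at hd

def nbrWeight (T : TorusData m) (w : TorusV T → TorusV T → ℝ) (u : Fin m → ℤ)
    (s : Fin m ⊕ Fin m) : ℝ :=
  w (tmk T u) (tmk T (gridNbr u s))

/-- The slopes of a minimiser in the definition of `kappa` at the edge `z ∼ z + e k`, where `a` and
`b` are the edge weights at `z` and at `z + e k`. -/
def optSlope (k : Fin m) (a b : Fin m ⊕ Fin m → ℝ) (s : Fin m ⊕ Fin m) : ℤ :=
  if s = inl k then 1 else if s = inr k then -1 else if a s < b s then 1 else -1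

theorem sub_mul_sign_eq_neg_abs (a b : ℝ) : (a - b) * (if a < b then 1 else -1) = -|a - b| := by
  split_ifs with h
  · rw [abs_of_neg (sub_neg.mpr h)]; ring
  · rw [abs_of_nonneg (sub_nonneg.mpr (not_lt.mp h))]; ring

theorem sum_sub_mul_optSlope (k : Fin m) (a b : Fin m ⊕ Fin m → ℝ) :
    ∑ s, (a s - b s) * (optSlope k a b s : ℝ) =
      a (inl k) - b (inl k) - (a (inr k) - b (inr k)) -
        ∑ i, if i ≠ k then |a (inl i) - b (inl i)| + |a (inr i) - b (inr i)| else 0 := by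
  have hsign : ∀ s, s ≠ inl k → s ≠ inr k →
      (a s - b s) * (optSlope k a b s : ℝ) = -|a s - b s| := by
    intro s h₁ h₂
    simp only [optSlope, h₁, h₂, if_false]
    push_cast
    exact sub_mul_sign_eq_neg_abs _ _
  have hrest : ∀ i ∈ ({k}ᶜ : Finset (Fin m)),
      (a (inl i) - b (inl i)) * (optSlope k a b (inl i) : ℝ) +
        (a (inr i) - b (inr i)) * (optSlope k a b (inr i) : ℝ) =
      -(if i ≠ k then |a (inl i) - b (inl i)| + |a (inr i) - b (inr i)| else 0) := by
    intro i hi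
    have hik : i ≠ k := by simpa using hi
    rw [hsign _ (by simpa using hik) inl_ne_inr, hsign _ inr_ne_inl (by simpa using hik),
      if_pos hik]
    ring
  rw [Fintype.sum_sum_type, ← Finset.sum_add_distrib, Fintype.sum_eq_add_sum_compl k,
    Fintype.sum_eq_add_sum_compl k, Finset.sum_congr rfl hrest, Finset.sum_neg_distrib]
  simp only [optSlope, ↓reduceIte, reduceCtorEq, Int.cast_one, Int.cast_neg, ne_eq,
    not_true_eq_false, zero_add]
  ring

variable {w : TorusV T → TorusV T → ℝ} {z y : Fin m → ℤ} {k : Fin m}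

theorem gridNbr_inl_eq (hy : y = z + e m k) : gridNbr z (inl k) = y := hy.symm

theorem gridNbr_inr_eq (hy : y = z + e m k) : gridNbr y (inr k) = z := by simp [hy]

theorem gridNbr_eq_gridNbr_add (hy : y = z + e m k) (s : Fin m ⊕ Fin m) :
    gridNbr y s = gridNbr (gridNbr z s) (inl k) := by
  rw [hy, gridNbr_add, gridNbr_inl]

theorem IsometricOn.injOn_left (hiso : IsometricOn T (range (gridNbr z) ∪ range (gridNbr y)))
    (hy : y = z + e m k) : InjOn (tmk T) (insert z (range (gridNbr z))) :=
  hiso.injOn.mono (insert_subset (Or.inr ⟨inr k, gridNbr_inr_eq hy⟩) subset_union_left)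

theorem IsometricOn.injOn_right (hiso : IsometricOn T (range (gridNbr z) ∪ range (gridNbr y)))
    (hy : y = z + e m k) : InjOn (tmk T) (insert y (range (gridNbr y))) :=
  hiso.injOn.mono (insert_subset (Or.inl ⟨inl k, gridNbr_inl_eq hy⟩) subset_union_right)

theorem lap_sub_lap_eq (hy : y = z + e m k)
    (hiso : IsometricOn T (range (gridNbr z) ∪ range (gridNbr y))) (f : TorusV T → ℤ) :
    lap (torusG T) w f (tmk T z) - lap (torusG T) w f (tmk T y) =
      ∑ s, (nbrWeight T w z s * ((f (tmk T (gridNbr z s)) : ℝ) - f (tmk T z)) -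
        nbrWeight T w y s * ((f (tmk T (gridNbr y s)) : ℝ) - f (tmk T y))) := by
  rw [lap_torusG_tmk w f (hiso.injOn_left hy), lap_torusG_tmk w f (hiso.injOn_right hy),
    ← Finset.sum_sub_distrib]
  rfl

theorem nbrWeight_nonneg (hw : ∀ a b, (torusG T).Adj a b → 0 ≤ w a b) {u : Fin m → ℤ}
    (hu : InjOn (tmk T) (insert u (range (gridNbr u)))) (s : Fin m ⊕ Fin m) :
    0 ≤ nbrWeight T w u s :=
  hw _ _ <| torusG_adj_tmk_iff.mpr
    ⟨fun h => gridNbr_ne u s (hu (by simp) (by simp) h).symm, s, rfl⟩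

theorem neg_abs_sub_le_mul_sub_mul {w₁ w₂ a b : ℝ} (h₂ : 0 ≤ w₂) (ha : |a| ≤ 1) (hba : b ≤ a) :
    -|w₁ - w₂| ≤ w₁ * a - w₂ * b := by
  obtain ⟨ha₁, ha₂⟩ := abs_le.mp ha
  have hwb := mul_nonneg h₂ (sub_nonneg.mpr hba)
  rcases abs_cases (w₁ - w₂) with ⟨h, h'⟩ | ⟨h, h'⟩ <;> rw [h]
  · nlinarith [mul_nonneg h' (neg_le_iff_add_nonneg.mp ha₁)]
  · nlinarith [mul_nonneg (neg_nonneg.mpr h'.le) (sub_nonneg.mpr ha₂)]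

theorem sum_sub_mul_optSlope_le (hw : ∀ a b, (torusG T).Adj a b → 0 ≤ w a b)
    (hy : y = z + e m k) (hiso : IsometricOn T (range (gridNbr z) ∪ range (gridNbr y)))
    {f : TorusV T → ℤ} (hf : Lip1 (torusG T) f) (hfy : f (tmk T y) = f (tmk T z) + 1) :
    ∑ s, (nbrWeight T w z s - nbrWeight T w y s) *
        (optSlope k (nbrWeight T w z) (nbrWeight T w y) s : ℝ) ≤
      lap (torusG T) w f (tmk T z) - lap (torusG T) w f (tmk T y) := by
  rw [lap_sub_lap_eq hy hiso]
  refine Finset.sum_le_sum fun s _ => ?_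
  have hwz := nbrWeight_nonneg hw (hiso.injOn_left hy) s
  have hwy := nbrWeight_nonneg hw (hiso.injOn_right hy) s
  have ha : |((f (tmk T (gridNbr z s)) - f (tmk T z) : ℤ) : ℝ)| ≤ 1 := by
    exact_mod_cast hf.abs_sub_gridNbr_le_one z s
  have hba : ((f (tmk T (gridNbr y s)) - f (tmk T y) : ℤ) : ℝ) ≤
      ((f (tmk T (gridNbr z s)) - f (tmk T z) : ℤ) : ℝ) := by
    have := (abs_le.mp (hf.abs_sub_gridNbr_le_one (gridNbr z s) (inl k))).2
    rw [← gridNbr_eq_gridNbr_add hy] at this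
    exact_mod_cast (show _ ≤ _ by omega)
  have hfy' : (f (tmk T y) : ℝ) = f (tmk T z) + 1 := by exact_mod_cast hfy
  push_cast at ha hba
  rw [abs_le] at ha
  by_cases hk₁ : s = inl k
  · subst hk₁
    simp only [gridNbr_inl_eq hy, hfy', optSlope, if_true, Int.cast_one] at hba ⊢
    nlinarith
  by_cases hk₂ : s = inr k
  · subst hk₂
    simp only [gridNbr_inr_eq hy, hfy', optSlope, hk₁, if_true, if_false, Int.cast_neg,
      Int.cast_one]
    nlinarith
  simp only [optSlope, hk₁, hk₂, if_false]
  push_cast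
  rw [sub_mul_sign_eq_neg_abs]
  exact neg_abs_sub_le_mul_sub_mul hwy (abs_le.mpr ha) hba

theorem exists_lip1_slopes (hy : y = z + e m k)
    (hiso : IsometricOn T (range (gridNbr z) ∪ range (gridNbr y))) {ε : Fin m ⊕ Fin m → ℤ}
    (hε : ∀ s, |ε s| ≤ 1) (hk₁ : ε (inl k) = 1) (hk₂ : ε (inr k) = -1) :
    ∃ F : TorusV T → ℤ, Lip1 (torusG T) F ∧
      ∀ s, F (tmk T (gridNbr z s)) = F (tmk T z) + ε s ∧
        F (tmk T (gridNbr y s)) = F (tmk T y) + ε s := by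
  let p : (Fin m ⊕ Fin m) ⊕ (Fin m ⊕ Fin m) → Fin m → ℤ := Sum.elim (gridNbr z) (gridNbr y)
  have hp : ∀ i, p i ∈ range (gridNbr z) ∪ range (gridNbr y) := by
    rintro (s | s)
    exacts [Or.inl ⟨s, rfl⟩, Or.inr ⟨s, rfl⟩]
  have hy_add : ∀ s, hingeSum ε z (gridNbr y s) = ε s + 1 := fun s => by
    rw [hy, gridNbr_add, hingeSum_add_e hk₁ hk₂, hingeSum_gridNbr]
  have : Nonempty (Fin m) := ⟨k⟩
  obtain ⟨F, hF, hFp⟩ := exists_lip1_extension (torusG_connected T) (tmk T ∘ p)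
    (hingeSum ε z ∘ p) fun i j => by
      simpa [hiso _ (hp i) _ (hp j)] using lip1_hingeSum hε (p i) (p j)
  have hFz : ∀ s, F (tmk T (gridNbr z s)) = ε s := fun s =>
    (hFp (inl s)).trans (hingeSum_gridNbr s)
  have hFy : ∀ s, F (tmk T (gridNbr y s)) = ε s + 1 := fun s => (hFp (inr s)).trans (hy_add s)
  have hz0 : F (tmk T z) = 0 := by rw [← gridNbr_inr_eq hy, hFy, hk₂, neg_add_cancel]
  have hy1 : F (tmk T y) = 1 := by rw [← gridNbr_inl_eq hy, hFz, hk₁]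
  exact ⟨F, hF, fun s => ⟨by rw [hFz, hz0, zero_add], by rw [hFy, hy1, add_comm]⟩⟩

theorem kappa_torusG_eq (hw : ∀ a b, (torusG T).Adj a b → 0 ≤ w a b) (hy : y = z + e m k)
    (hiso : IsometricOn T (range (gridNbr z) ∪ range (gridNbr y))) :
    kappa (torusG T) w (tmk T z) (tmk T y) = ∑ s, (nbrWeight T w z s - nbrWeight T w y s) *
      (optSlope k (nbrWeight T w z) (nbrWeight T w y) s : ℝ) := by
  have hε : ∀ s, |optSlope k (nbrWeight T w z) (nbrWeight T w y) s| ≤ 1 := fun s => by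
    unfold optSlope; split_ifs <;> simp
  obtain ⟨F, hF, hFs⟩ := exists_lip1_slopes hy hiso hε (by simp [optSlope]) (by simp [optSlope])
  refine IsLeast.csInf_eq ⟨⟨F, hF, ?_, ?_⟩, ?_⟩
  · simpa [gridNbr_inl_eq hy, optSlope] using (hFs (inl k)).1
  · rw [lap_sub_lap_eq hy hiso]
    refine Finset.sum_congr rfl fun s _ => ?_
    rw [(hFs s).1, (hFs s).2]
    push_cast
    ring
  · rintro r ⟨f, hf, hfy, rfl⟩
    exact sum_sub_mul_optSlope_le hw hy hiso hf hfy

end Curvature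

/-- Here `z` parametrizes the vertex `x = Az` of `Aℤⁿ` and `y = x + αₙ` corresponds to
`z + eₙ`; the (`qℤⁿ`-periodic) weight on `Aℤⁿ` induced from the torus weight `wT` is
`w(u, v) = wT [u] [v]`. -/
theorem kappa_torus_formula (n : ℕ) (T : TorusData (n + 1))
    (wT : TorusV T → TorusV T → ℝ)
    (hsymm : ∀ a b, wT a b = wT b a)
    (hpos : ∀ a b, (torusG T).Adj a b → 0 < wT a b)
    (z y : Fin (n + 1) → ℤ) (hy : y = z + e (n + 1) (Fin.last n))
    (hdist : ∀ u v : Fin (n + 1) → ℤ,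
      ((grid (n + 1)).dist z u ≤ 1 ∨ (grid (n + 1)).dist y u ≤ 1) →
      ((grid (n + 1)).dist z v ≤ 1 ∨ (grid (n + 1)).dist y v ≤ 1) →
      (grid (n + 1)).dist u v = (torusG T).dist (tmk T u) (tmk T v)) :
    kappa (torusG T) wT (tmk T z) (tmk T y) =
      2 * wT (tmk T z) (tmk T y)
        - wT (tmk T z) (tmk T (z - e (n + 1) (Fin.last n)))
        - wT (tmk T y) (tmk T (y + e (n + 1) (Fin.last n)))
        - ∑ i, (if i ≠ Fin.last n then
            |wT (tmk T z) (tmk T (z + e (n + 1) i)) - wT (tmk T y) (tmk T (y + e (n + 1) i))| +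
            |wT (tmk T z) (tmk T (z - e (n + 1) i)) - wT (tmk T y) (tmk T (y - e (n + 1) i))|
          else 0) := by
  have hball : ∀ u ∈ range (gridNbr z) ∪ range (gridNbr y),
      (grid (n + 1)).dist z u ≤ 1 ∨ (grid (n + 1)).dist y u ≤ 1 := by
    rintro _ (⟨s, rfl⟩ | ⟨s, rfl⟩)
    · exact Or.inl (SimpleGraph.dist_eq_one_iff_adj.mpr (grid_adj_gridNbr z s)).le
    · exact Or.inr (SimpleGraph.dist_eq_one_iff_adj.mpr (grid_adj_gridNbr y s)).le
  have hiso : IsometricOn T (range (gridNbr z) ∪ range (gridNbr y)) :=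
    fun u hu v hv => hdist u v (hball u hu) (hball v hv)
  rw [kappa_torusG_eq (fun a b h => (hpos a b h).le) hy hiso, sum_sub_mul_optSlope]
  simp only [nbrWeight, gridNbr_inl_eq hy, gridNbr_inr_eq hy, gridNbr_inl, gridNbr_inr,
    hsymm (tmk T y) (tmk T z)]
  ring

end PMT
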